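/- (Strict ordering of iterated updates.) Define D^{(1)}(I¹) = I¹ and recursively D^{(i)}(I¹,…,I^i) = D(I¹, D^{(i-1)}(I²,…,I^i)) for sequences with strictly increasing Cesàro limits 𝔠(I¹) < ⋯ < 𝔠(I^N). Then D^{(N)}(I¹,…,I^N)_k > D^{(N-1)}(I¹,…,I^{N-1})_k for every k ∈ ℤ. -/

import Mathlib

open Filter Topology

noncomputable section

/-- Left-tail logarithmic Cesàro limit of a bi-infinite positive sequence. -/
def cesaroLim (X : ℤ → ℝ) (c : ℝ) : Prop :=
  Filter.Tendsto (fun n : ℕ => (∑ k ∈ Finset.range n, Real.log (X (-(k : ℤ)))) / (n : ℝ))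
    Filter.atTop (nhds c)

/-- The `m`-th term of the series defining `J_k = Σ_{i ≤ k} W_i ∏_{j=i+1}^k (W_j / I_j)`,
corresponding to `i = k - m`. -/
def Jterm (W I : ℤ → ℝ) (k : ℤ) (m : ℕ) : ℝ :=
  W (k - (m : ℤ)) * ∏ r ∈ Finset.range m, (W (k - (r : ℤ)) / I (k - (r : ℤ)))

/-- `S(W,I)_k = Σ_{i ≤ k} W_i ∏_{j=i+1}^k (W_j / I_j)`. -/
def Smap (W I : ℤ → ℝ) (k : ℤ) : ℝ := ∑' m : ℕ, Jterm W I k m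

/-- The update map `D(W,I)_k = I_k J_k / J_{k-1}`. -/
def Dmap (W I : ℤ → ℝ) (k : ℤ) : ℝ := I k * Smap W I k / Smap W I (k - 1)

/-- The dual-weight map `R(W,I)_k = (I_k⁻¹ + J_{k-1}⁻¹)⁻¹`. -/
def Rmap (W I : ℤ → ℝ) (k : ℤ) : ℝ := ((I k)⁻¹ + (Smap W I (k - 1))⁻¹)⁻¹

/-- The iterated update map `D^{(n+1)}(I⁰,…,Iⁿ)`. -/
def Diter : (n : ℕ) → (Fin (n + 1) → ℤ → ℝ) → ℤ → ℝ
  | 0, I => I 0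
  | n + 1, I => Dmap (I 0) (Diter n (fun i => I i.succ))


section AuxLemmas

lemma aux_inv : Tendsto (fun m : ℕ => 1/((m:ℝ))) atTop (nhds 0) :=
  tendsto_one_div_atTop_nhds_zero_nat

lemma aux_const (C : ℝ) : Tendsto (fun m : ℕ => C/(m:ℝ)) atTop (nhds 0) := by
  have := aux_inv.const_mul C
  simpa [div_eq_mul_inv, mul_comm] using this

lemma aux_ratio : Tendsto (fun m : ℕ => ((m:ℝ)+1)/m) atTop (nhds 1) := by
  have h : Tendsto (fun m : ℕ => 1 + 1/(m:ℝ)) atTop (nhds 1) := by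
    simpa using tendsto_const_nhds.add aux_inv
  apply h.congr'
  filter_upwards [eventually_ge_atTop 1] with m hm
  have : (m:ℝ) ≠ 0 := by positivity
  field_simp

lemma aux_ratio' : Tendsto (fun m : ℕ => (m:ℝ)/((m:ℝ)+1)) atTop (nhds 1) := by
  have h : Tendsto (fun m : ℕ => ((m:ℝ)+1)/((m:ℝ)+1) - 1/((m:ℝ)+1)) atTop (nhds 1) := by
    have h1 : Tendsto (fun m : ℕ => 1/((m:ℝ)+1)) atTop (nhds 0) := by
      have := (tendsto_add_atTop_iff_nat 1).2 aux_inv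
      simpa [Nat.cast_add] using this
    have h2 : Tendsto (fun m : ℕ => ((m:ℝ)+1)/((m:ℝ)+1)) atTop (nhds 1) := by
      apply tendsto_const_nhds.congr'
      filter_upwards with m
      have : ((m:ℝ)+1) ≠ 0 := by positivity
      field_simp
    simpa using h2.sub h1
  apply h.congr
  intro m
  have : ((m:ℝ)+1) ≠ 0 := by positivity
  field_simp
  ring

lemma shift_avg {S : ℕ → ℝ} {c : ℝ} (h : Tendsto (fun m : ℕ => S m / m) atTop (nhds c)) :
    Tendsto (fun m : ℕ => S (m+1) / m) atTop (nhds c) := by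
  have h1 : Tendsto (fun m : ℕ => S (m+1) / ((m:ℝ)+1)) atTop (nhds c) := by
    have := (tendsto_add_atTop_iff_nat 1).2 h
    simpa [Nat.cast_add] using this
  have h2 := h1.mul aux_ratio
  rw [mul_one] at h2
  apply h2.congr'
  filter_upwards [eventually_ge_atTop 1] with m hm
  have hm0 : (m:ℝ) ≠ 0 := by
    simp only [ne_eq, Nat.cast_eq_zero]; omega
  have : ((m:ℝ)+1) ≠ 0 := by positivity
  field_simp

lemma cesaro_gen {X : ℤ → ℝ} {c : ℝ} (h : cesaroLim X c) (k : ℤ) :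
    Tendsto (fun m : ℕ => (∑ r ∈ Finset.range m, Real.log (X (k - (r:ℤ)))) / m)
      atTop (nhds c) := by
  induction k using Int.induction_on with
  | zero => simpa [zero_sub, cesaroLim] using h
  | succ k ih =>
      -- T (m+1) = S m + log X (k+1)
      have key : ∀ m : ℕ, (∑ r ∈ Finset.range (m+1), Real.log (X ((k+1) - (r:ℤ))))
          = (∑ r ∈ Finset.range m, Real.log (X (k - (r:ℤ)))) + Real.log (X (k+1)) := by
        intro m
        rw [Finset.sum_range_succ']
        congr 1
        any_goals
          apply Finset.sum_congr rfl
          intro r _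
          congr 1
          push_cast
          ring
        all_goals norm_num
      rw [← tendsto_add_atTop_iff_nat 1]
      have h1 : Tendsto (fun m : ℕ =>
          ((∑ r ∈ Finset.range m, Real.log (X (k - (r:ℤ)))) / m) * ((m:ℝ)/((m:ℝ)+1))
          + Real.log (X (k+1)) / ((m:ℝ)+1)) atTop (nhds (c * 1 + 0)) := by
        refine (ih.mul aux_ratio').add ?_
        have := (tendsto_add_atTop_iff_nat 1).2 (aux_const (Real.log (X (k+1))))
        simpa [Nat.cast_add] using this
      rw [mul_one, add_zero] at h1
      apply h1.congr
      intro m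
      rw [key m]
      rcases Nat.eq_zero_or_pos m with hm | hm
      · subst hm; simp
      · have hm0 : (m:ℝ) ≠ 0 := by simp only [ne_eq, Nat.cast_eq_zero]; omega
        have hm1 : ((m:ℝ)+1) ≠ 0 := by positivity
        push_cast
        field_simp
  | pred k ih =>
      -- S (m+1) = T m + log X (-k), where T m = sum for (-k-1)
      have key : ∀ m : ℕ, (∑ r ∈ Finset.range (m+1), Real.log (X ((-k:ℤ) - (r:ℤ))))
          = (∑ r ∈ Finset.range m, Real.log (X ((-k-1:ℤ) - (r:ℤ)))) + Real.log (X (-k)) := by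
        intro m
        rw [Finset.sum_range_succ']
        congr 1
        any_goals
          apply Finset.sum_congr rfl
          intro r _
          congr 1
          push_cast
          ring
        all_goals norm_num
      have h1 : Tendsto (fun m : ℕ =>
          (∑ r ∈ Finset.range (m+1), Real.log (X ((-k:ℤ) - (r:ℤ)))) / m
          - Real.log (X (-k)) / m) atTop (nhds (c - 0)) :=
        (shift_avg ih).sub (aux_const _)
      rw [sub_zero] at h1
      apply h1.congr
      intro m
      rw [key m, add_comm, add_div]
      ring

lemma cesaro_term {X : ℤ → ℝ} {c : ℝ} (h : cesaroLim X c) (k : ℤ) :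
    Tendsto (fun m : ℕ => Real.log (X (k - (m:ℤ))) / m) atTop (nhds 0) := by
  have h1 := shift_avg (cesaro_gen h k)
  have h2 := (cesaro_gen h k)
  have h3 := h1.sub h2
  rw [sub_self] at h3
  apply h3.congr
  intro m
  rw [Finset.sum_range_succ, ← sub_div]
  ring_nf

variable {W X X' : ℤ → ℝ} {cW cX cX' : ℝ}

lemma Jterm_pos (hW : ∀ k, 0 < W k) (hX : ∀ k, 0 < X k) (k : ℤ) (m : ℕ) :
    0 < Jterm W X k m := by
  unfold Jterm
  exact mul_pos (hW _) (Finset.prod_pos fun r _ => div_pos (hW _) (hX _))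

lemma log_Jterm (hW : ∀ k, 0 < W k) (hX : ∀ k, 0 < X k) (k : ℤ) (m : ℕ) :
    Real.log (Jterm W X k m) = Real.log (W (k - (m:ℤ)))
      + ∑ r ∈ Finset.range m, (Real.log (W (k - (r:ℤ))) - Real.log (X (k - (r:ℤ)))) := by
  unfold Jterm
  rw [Real.log_mul (ne_of_gt (hW _))
    (ne_of_gt (Finset.prod_pos fun r _ => div_pos (hW _) (hX _))),
    Real.log_prod (fun r _ => ne_of_gt (div_pos (hW _) (hX _)))]
  congr 1
  exact Finset.sum_congr rfl fun r _ => Real.log_div (ne_of_gt (hW _)) (ne_of_gt (hX _))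

lemma log_Jterm_tendsto (hW : ∀ k, 0 < W k) (hX : ∀ k, 0 < X k)
    (hcW : cesaroLim W cW) (hcX : cesaroLim X cX) (k : ℤ) :
    Tendsto (fun m : ℕ => Real.log (Jterm W X k m) / m) atTop (nhds (cW - cX)) := by
  have h1 : Tendsto (fun m : ℕ => Real.log (W (k - (m:ℤ))) / m
      + ((∑ r ∈ Finset.range m, Real.log (W (k - (r:ℤ)))) / m
        - (∑ r ∈ Finset.range m, Real.log (X (k - (r:ℤ)))) / m))
      atTop (nhds (0 + (cW - cX))) :=
    (cesaro_term hcW k).add ((cesaro_gen hcW k).sub (cesaro_gen hcX k))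
  rw [zero_add] at h1
  apply h1.congr
  intro m
  rw [log_Jterm hW hX, add_div, Finset.sum_sub_distrib, sub_div]

lemma summable_Jterm (hW : ∀ k, 0 < W k) (hX : ∀ k, 0 < X k)
    (hcW : cesaroLim W cW) (hcX : cesaroLim X cX) (hlt : cW < cX) (k : ℤ) :
    Summable (Jterm W X k) := by
  set ε := cX - cW with hεdef
  have hε : 0 < ε := by simp [hεdef]; linarith
  have h := log_Jterm_tendsto hW hX hcW hcX k
  have hev : ∀ᶠ m : ℕ in atTop, Real.log (Jterm W X k m) / m < -ε/2 := by
    apply h.eventually_lt_const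
    simp [hεdef]; linarith
  rw [eventually_atTop] at hev
  obtain ⟨M, hM⟩ := hev
  have key : ∀ m : ℕ, m ≥ max M 1 → Jterm W X k m ≤ (Real.exp (-ε/2)) ^ m := by
    intro m hm
    have hm1 : 1 ≤ m := le_of_max_le_right hm
    have hmpos : (0:ℝ) < m := by exact_mod_cast hm1
    have := hM m (le_of_max_le_left hm)
    have hlog : Real.log (Jterm W X k m) < (-ε/2) * m := by
      rw [div_lt_iff₀ hmpos] at this; linarith [this]
    calc Jterm W X k m = Real.exp (Real.log (Jterm W X k m)) :=
          (Real.exp_log (Jterm_pos hW hX k m)).symm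
      _ ≤ Real.exp ((-ε/2) * m) := Real.exp_le_exp.2 hlog.le
      _ = (Real.exp (-ε/2)) ^ m := by rw [← Real.exp_nat_mul]; ring_nf
  set M' := max M 1
  rw [← summable_nat_add_iff M']
  apply Summable.of_nonneg_of_le (fun m => (Jterm_pos hW hX k _).le)
    (fun m => key (m + M') (le_add_self))
  exact ((summable_geometric_of_lt_one (Real.exp_nonneg _)
    (Real.exp_lt_one_iff.2 (by linarith))).comp_injective (add_left_injective M'))

lemma Smap_pos (hW : ∀ k, 0 < W k) (hX : ∀ k, 0 < X k)
    (hcW : cesaroLim W cW) (hcX : cesaroLim X cX) (hlt : cW < cX) (k : ℤ) :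
    0 < Smap W X k :=
  Summable.tsum_pos (summable_Jterm hW hX hcW hcX hlt k)
    (fun m => (Jterm_pos hW hX k m).le) 0 (Jterm_pos hW hX k 0)

lemma Jterm_zero (k : ℤ) : Jterm W X k 0 = W k := by simp [Jterm]

lemma Jterm_succ (k : ℤ) (m : ℕ) :
    Jterm W X k (m+1) = (W k / X k) * Jterm W X (k-1) m := by
  unfold Jterm
  rw [Finset.prod_range_succ']
  have h1 : ∀ r : ℕ, k - ((r:ℤ)+1) = (k-1) - r := fun r => by ring
  have h2 : (k - ((m:ℕ)+1:ℕ)) = (k-1) - (m:ℤ) := by push_cast; ring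
  rw [h2]
  have h3 : ∀ r ∈ Finset.range m,
      W (k - ((r:ℕ)+1:ℕ)) / X (k - ((r:ℕ)+1:ℕ)) = W ((k-1) - r) / X ((k-1) - r) := by
    intro r _; rw [show ((r:ℕ)+1:ℕ) = ((r:ℤ)+1) by push_cast; ring] at *
    rw [h1 r]
  rw [Finset.prod_congr rfl h3]
  simp
  ring

lemma Smap_rec (hW : ∀ k, 0 < W k) (hX : ∀ k, 0 < X k)
    (hcW : cesaroLim W cW) (hcX : cesaroLim X cX) (hlt : cW < cX) (k : ℤ) :
    Smap W X k = W k + (W k / X k) * Smap W X (k-1) := by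
  unfold Smap
  rw [Summable.tsum_eq_zero_add (summable_Jterm hW hX hcW hcX hlt k), Jterm_zero]
  congr 1
  calc (∑' m : ℕ, Jterm W X k (m+1)) = ∑' m : ℕ, (W k / X k) * Jterm W X (k-1) m := by
        exact tsum_congr fun m => Jterm_succ k m
    _ = (W k / X k) * ∑' m : ℕ, Jterm W X (k-1) m := tsum_mul_left

lemma Dmap_formula (hW : ∀ k, 0 < W k) (hX : ∀ k, 0 < X k)
    (hcW : cesaroLim W cW) (hcX : cesaroLim X cX) (hlt : cW < cX) (k : ℤ) :
    Dmap W X k = W k + W k * X k / Smap W X (k-1) := by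
  unfold Dmap
  rw [Smap_rec hW hX hcW hcX hlt k]
  have hS := Smap_pos hW hX hcW hcX hlt (k-1)
  have hXk := hX k
  field_simp
  ring

lemma lt_Dmap (hW : ∀ k, 0 < W k) (hX : ∀ k, 0 < X k)
    (hcW : cesaroLim W cW) (hcX : cesaroLim X cX) (hlt : cW < cX) (k : ℤ) :
    W k < Dmap W X k := by
  rw [Dmap_formula hW hX hcW hcX hlt k]
  have hS := Smap_pos hW hX hcW hcX hlt (k-1)
  have := div_pos (mul_pos (hW k) (hX k)) hS
  linarith

lemma Dmap_pos (hW : ∀ k, 0 < W k) (hX : ∀ k, 0 < X k)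
    (hcW : cesaroLim W cW) (hcX : cesaroLim X cX) (hlt : cW < cX) (k : ℤ) :
    0 < Dmap W X k := lt_trans (hW k) (lt_Dmap hW hX hcW hcX hlt k)

lemma Smap_anti (hW : ∀ k, 0 < W k) (hX : ∀ k, 0 < X k) (hX' : ∀ k, 0 < X' k)
    (hcW : cesaroLim W cW) (hcX : cesaroLim X cX) (hcX' : cesaroLim X' cX')
    (hlt : cW < cX) (hlt' : cW < cX') (hle : ∀ k, X k ≤ X' k) (k : ℤ) :
    Smap W X' k ≤ Smap W X k := by
  apply Summable.tsum_le_tsum _ (summable_Jterm hW hX' hcW hcX' hlt' k)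
    (summable_Jterm hW hX hcW hcX hlt k)
  intro m
  unfold Jterm
  gcongr with r hr
  any_goals first
    | exact fun r _ => div_nonneg (hW _).le (hX' _).le
    | exact (hW _).le
    | exact hX _
    | exact hle _

lemma Dmap_lt_Dmap (hW : ∀ k, 0 < W k) (hX : ∀ k, 0 < X k) (hX' : ∀ k, 0 < X' k)
    (hcW : cesaroLim W cW) (hcX : cesaroLim X cX) (hcX' : cesaroLim X' cX')
    (hlt : cW < cX) (hlt' : cW < cX') (hlt2 : ∀ k, X k < X' k) (k : ℤ) :
    Dmap W X k < Dmap W X' k := by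
  rw [Dmap_formula hW hX hcW hcX hlt k, Dmap_formula hW hX' hcW hcX' hlt' k]
  have hS := Smap_pos hW hX hcW hcX hlt (k-1)
  have hS' := Smap_pos hW hX' hcW hcX' hlt' (k-1)
  have hSS : Smap W X' (k-1) ≤ Smap W X (k-1) :=
    Smap_anti hW hX hX' hcW hcX hcX' hlt hlt' (fun k => (hlt2 k).le) (k-1)
  have h1 : W k * X k / Smap W X (k-1) ≤ W k * X k / Smap W X' (k-1) := by
    gcongr
    exact (mul_pos (hW k) (hX k)).le
  have h2 : W k * X k / Smap W X' (k-1) < W k * X' k / Smap W X' (k-1) := by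
    gcongr
    any_goals first | exact hW k | exact hlt2 k
  linarith
lemma log_Smap_tendsto (hW : ∀ k, 0 < W k) (hX : ∀ k, 0 < X k)
    (hcW : cesaroLim W cW) (hcX : cesaroLim X cX) (hlt : cW < cX) :
    Tendsto (fun p : ℕ => Real.log (Smap W X (-(p:ℤ))) / p) atTop (nhds 0) := by
  set ε := cX - cW with hεdef
  have hε : 0 < ε := by simp only [hεdef]; linarith
  set aW : ℕ → ℝ := fun n => Real.log (W (-(n:ℤ))) with haWdef
  set G : ℕ → ℝ := fun n =>
    ∑ r ∈ Finset.range n, (Real.log (W (-(r:ℤ))) - Real.log (X (-(r:ℤ)))) with hGdef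
  have haW : Tendsto (fun n : ℕ => aW n / n) atTop (nhds 0) := by
    have := cesaro_term hcW 0
    simpa [haWdef, zero_sub] using this
  have hG : Tendsto (fun n : ℕ => G n / n) atTop (nhds (-ε)) := by
    have h1 := (hcW.sub hcX)
    have he : cW - cX = -ε := by simp only [hεdef]; ring
    rw [he] at h1
    apply h1.congr
    intro n
    simp only [hGdef, Finset.sum_sub_distrib, sub_div]
  have hkey : ∀ p m : ℕ, Real.log (Jterm W X (-(p:ℤ)) m) = aW (p+m) + (G (p+m) - G p) := by
    intro p m
    rw [log_Jterm hW hX]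
    congr 1
    · rw [haWdef]; congr 2; push_cast; ring
    · rw [hGdef]
      simp only [Finset.sum_range_add]
      have hc : ∀ x : ℕ, (-(p:ℤ)) - (x:ℤ) = -(((p+x:ℕ)):ℤ) := by intro x; push_cast; ring
      rw [Finset.sum_congr rfl (fun x _ => by rw [hc x])]
      ring
  rw [NormedAddCommGroup.tendsto_nhds_zero]
  intro δ0 hδ0
  set δ := min (δ0/2) (ε/2) with hδdef
  have hδpos : 0 < δ := lt_min (by linarith) (by linarith)
  have hδ1 : δ ≤ δ0/2 := min_le_left _ _
  have hδ2 : δ ≤ ε/2 := min_le_right _ _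
  have hev1 : ∀ᶠ n : ℕ in atTop, |aW n / n| < δ/4 := by
    have h := haW.eventually (show ∀ᶠ y in nhds (0:ℝ), y ∈ Set.Ioo (-(δ/4)) (δ/4) from
      Ioo_mem_nhds (by linarith) (by linarith))
    filter_upwards [h] with n hn
    rw [abs_lt]; exact ⟨hn.1, hn.2⟩
  have hev2 : ∀ᶠ n : ℕ in atTop, |G n / n - (-ε)| < δ/4 := by
    have h := hG.eventually (show ∀ᶠ y in nhds (-ε:ℝ), y ∈ Set.Ioo (-ε - δ/4) (-ε + δ/4) from
      Ioo_mem_nhds (by linarith) (by linarith))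
    filter_upwards [h] with n hn
    rw [abs_lt]; constructor
    · linarith [hn.1]
    · linarith [hn.2]
  obtain ⟨M0, hM0⟩ := eventually_atTop.1 (hev1.and hev2)
  set M := max M0 1 with hMdef
  have habs : ∀ n, n ≥ M → |aW n| ≤ (δ/4)*n ∧ G n ≤ (-ε + δ/4)*n ∧ (-ε - δ/4)*n ≤ G n := by
    intro n hn
    have hn1 : 1 ≤ n := le_trans (le_max_right _ _) hn
    have hnpos : (0:ℝ) < n := by exact_mod_cast hn1
    obtain ⟨h1, h2⟩ := hM0 n (le_trans (le_max_left _ _) hn)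
    have hq1 : aW n = (aW n / n) * n := by field_simp
    have hq2 : G n = (G n / n) * n := by field_simp
    rw [abs_lt] at h1 h2
    refine ⟨abs_le.2 ⟨?_, ?_⟩, ?_, ?_⟩
    · nlinarith [h1.1]
    · nlinarith [h1.2]
    · nlinarith [h2.2]
    · nlinarith [h2.1]
  set q := Real.exp (δ/2 - ε) with hqdef
  have hq1 : q < 1 := Real.exp_lt_one_iff.2 (by linarith)
  have hq0 : 0 ≤ q := Real.exp_nonneg _
  set C := (1 - q)⁻¹ with hCdef
  have hC0 : 0 < C := inv_pos.2 (by linarith)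
  have hbound : ∀ p, p ≥ M → Real.log (Smap W X (-(p:ℤ))) ≤ δ * p + Real.log C := by
    intro p hp
    have hterm : ∀ m : ℕ, Jterm W X (-(p:ℤ)) m ≤ Real.exp (δ*p) * q ^ m := by
      intro m
      have h1 := hkey p m
      obtain ⟨e1, e2, _⟩ := habs (p+m) (le_trans hp (Nat.le_add_right _ _))
      obtain ⟨_, _, e3⟩ := habs p hp
      rw [abs_le] at e1
      push_cast at e1 e2 e3
      have hexp : Real.log (Jterm W X (-(p:ℤ)) m) ≤ δ*p + (δ/2 - ε)*m := by
        rw [h1]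
        have hm0 : (0:ℝ) ≤ (m:ℝ) := Nat.cast_nonneg m
        have hp0 : (0:ℝ) ≤ (p:ℝ) := Nat.cast_nonneg p
        nlinarith [e1.2, e2, e3]
      calc Jterm W X (-(p:ℤ)) m = Real.exp (Real.log (Jterm W X (-(p:ℤ)) m)) :=
            (Real.exp_log (Jterm_pos hW hX _ m)).symm
        _ ≤ Real.exp (δ*p + (δ/2 - ε)*m) := Real.exp_le_exp.2 hexp
        _ = Real.exp (δ*p) * q ^ m := by
            rw [Real.exp_add, hqdef, ← Real.exp_nat_mul]
            ring_nf
    have hS : Smap W X (-(p:ℤ)) ≤ Real.exp (δ*p) * C := by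
      have hsg : Summable (fun m : ℕ => Real.exp (δ*(p:ℝ)) * q ^ m) :=
        (summable_geometric_of_lt_one hq0 hq1).mul_left _
      have h2 := Summable.tsum_le_tsum hterm (summable_Jterm hW hX hcW hcX hlt _) hsg
      calc Smap W X (-(p:ℤ)) = ∑' m : ℕ, Jterm W X (-(p:ℤ)) m := rfl
        _ ≤ ∑' m : ℕ, Real.exp (δ*p) * q ^ m := h2
        _ = Real.exp (δ*p) * ∑' m : ℕ, q ^ m := tsum_mul_left
        _ = Real.exp (δ*p) * C := by rw [tsum_geometric_of_lt_one hq0 hq1]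
    calc Real.log (Smap W X (-(p:ℤ)))
        ≤ Real.log (Real.exp (δ*p) * C) :=
          Real.log_le_log (Smap_pos hW hX hcW hcX hlt _) hS
      _ = δ*p + Real.log C := by
          rw [Real.log_mul (Real.exp_ne_zero _) (ne_of_gt hC0), Real.log_exp]
  have hlow : ∀ p, p ≥ M → -(δ/4)*(p:ℝ) ≤ Real.log (Smap W X (-(p:ℤ))) := by
    intro p hp
    have h0 : W (-(p:ℤ)) ≤ Smap W X (-(p:ℤ)) := by
      have h := Summable.le_tsum (summable_Jterm hW hX hcW hcX hlt (-(p:ℤ))) 0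
        (fun j _ => (Jterm_pos hW hX _ j).le)
      rwa [Jterm_zero] at h
    have h1 : aW p ≤ Real.log (Smap W X (-(p:ℤ))) := Real.log_le_log (hW _) h0
    have e := (habs p hp).1
    rw [abs_le] at e
    linarith [e.1]
  obtain ⟨P, hP⟩ := eventually_atTop.1
    ((aux_const |Real.log C|).eventually_lt_const (show (0:ℝ) < δ0/4 by linarith))
  filter_upwards [eventually_ge_atTop M, eventually_ge_atTop P, eventually_ge_atTop 1]
    with p h1 h2 h3
  have hppos : (0:ℝ) < p := by exact_mod_cast h3
  have hup := hbound p h1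
  have hlo := hlow p h1
  rw [Real.norm_eq_abs, abs_lt]
  constructor
  · have hq : -(δ/4) ≤ Real.log (Smap W X (-(p:ℤ))) / p := by
      rw [le_div_iff₀ hppos]; linarith
    linarith
  · have hq : Real.log (Smap W X (-(p:ℤ))) / p ≤ δ + |Real.log C| / p := by
      rw [div_le_iff₀ hppos, add_mul, div_mul_cancel₀ _ (ne_of_gt hppos)]
      have h5 := le_abs_self (Real.log C)
      linarith
    have h4 := hP p h2
    linarith
lemma cesaro_Dmap (hW : ∀ k, 0 < W k) (hX : ∀ k, 0 < X k)
    (hcW : cesaroLim W cW) (hcX : cesaroLim X cX) (hlt : cW < cX) :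
    cesaroLim (Dmap W X) cX := by
  unfold cesaroLim
  set f : ℕ → ℝ := fun p => Real.log (Smap W X (-(p:ℤ))) with hfdef
  have hlog : ∀ p : ℕ, Real.log (Dmap W X (-(p:ℤ)))
      = Real.log (X (-(p:ℤ))) + (f p - f (p+1)) := by
    intro p
    have hSp := Smap_pos hW hX hcW hcX hlt (-(p:ℤ))
    have hSp1 := Smap_pos hW hX hcW hcX hlt (-(p:ℤ) - 1)
    unfold Dmap
    rw [Real.log_div (ne_of_gt (mul_pos (hX _) hSp)) (ne_of_gt hSp1),
      Real.log_mul (ne_of_gt (hX _)) (ne_of_gt hSp)]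
    have hc : (-(p:ℤ)) - 1 = -(((p+1:ℕ)):ℤ) := by push_cast; ring
    rw [hc]
    simp only [hfdef]
    ring
  have hsum : ∀ n : ℕ, (∑ k ∈ Finset.range n, Real.log (Dmap W X (-(k:ℤ))))
      = (∑ k ∈ Finset.range n, Real.log (X (-(k:ℤ)))) + (f 0 - f n) := by
    intro n
    rw [Finset.sum_congr rfl (fun k _ => hlog k), Finset.sum_add_distrib,
      Finset.sum_range_sub' f n]
  have hf0 : Tendsto (fun n : ℕ => f 0 / n) atTop (nhds 0) := aux_const _
  have hfn : Tendsto (fun n : ℕ => f n / n) atTop (nhds 0) :=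
    log_Smap_tendsto hW hX hcW hcX hlt
  have h := hcX.add (hf0.sub hfn)
  rw [sub_zero, add_zero] at h
  apply h.congr
  intro n
  rw [hsum n, add_div, sub_div]

lemma Diter_good : ∀ (n : ℕ) (I : Fin (n+1) → ℤ → ℝ) (c : Fin (n+1) → ℝ),
    (∀ i k, 0 < I i k) → (∀ i, cesaroLim (I i) (c i)) → StrictMono c →
    (∀ k, 0 < Diter n I k) ∧ cesaroLim (Diter n I) (c (Fin.last n)) := by
  intro n
  induction n with
  | zero =>
      intro I c hpos hc _
      exact ⟨hpos 0, hc 0⟩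
  | succ n ih =>
      intro I c hpos hc hmono
      obtain ⟨hXpos, hXc⟩ := ih (fun i => I i.succ) (fun i => c i.succ)
        (fun i k => hpos i.succ k) (fun i => hc i.succ)
        (fun i j hij => hmono (Fin.succ_lt_succ_iff.2 hij))
      have hlt : c 0 < c ((Fin.last n).succ) := hmono (Fin.succ_pos _)
      have hpos' : ∀ k, 0 < Diter (n+1) I k :=
        fun k => Dmap_pos (hpos 0) hXpos (hc 0) hXc hlt k
      have hc' : cesaroLim (Diter (n+1) I) (c ((Fin.last n).succ)) :=
        cesaro_Dmap (hpos 0) hXpos (hc 0) hXc hlt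
      rw [Fin.succ_last] at hc' hlt
      exact ⟨hpos', hc'⟩

theorem stmt8 (N : ℕ) (I : Fin (N + 2) → ℤ → ℝ) (c : Fin (N + 2) → ℝ)
    (hpos : ∀ i k, 0 < I i k) (hc : ∀ i, cesaroLim (I i) (c i))
    (hmono : StrictMono c) :
    ∀ k : ℤ, Diter N (fun i : Fin (N + 1) => I i.castSucc) k < Diter (N + 1) I k := by
  induction N with
  | zero =>
      intro k
      show I ((0 : Fin 1).castSucc) k < Dmap (I 0) (Diter 0 (fun i => I i.succ)) k
      have h0 : ((0 : Fin 1).castSucc : Fin 2) = 0 := rfl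
      have h1 : ((0 : Fin 1).succ : Fin 2) = 1 := rfl
      show I 0 k < Dmap (I 0) (I ((0:Fin 1).succ)) k
      rw [h1]
      exact lt_Dmap (hpos 0) (hpos 1) (hc 0) (hc 1) (hmono (by decide)) k
  | succ N ih =>
      intro k
      -- LHS = Dmap (I 0) X, RHS = Dmap (I 0) X'
      have hL : Diter (N+1) (fun i : Fin (N+2) => I i.castSucc)
          = Dmap (I 0) (Diter N (fun i : Fin (N+1) => I (i.succ.castSucc))) := by
        show Dmap (I ((0 : Fin (N+2)).castSucc)) _ = _
        congr 1
      have hR : Diter (N+2) I = Dmap (I 0) (Diter (N+1) (fun i : Fin (N+2) => I i.succ)) := rfl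
      rw [hL, hR]
      -- the inner comparison from ih applied to the shifted family
      have hinner : ∀ k, Diter N (fun i : Fin (N+1) => I (i.succ.castSucc)) k
          < Diter (N+1) (fun i : Fin (N+2) => I i.succ) k := by
        have := ih (fun i => I i.succ) (fun i => c i.succ)
          (fun i k => hpos i.succ k) (fun i => hc i.succ)
          (fun i j hij => hmono (Fin.succ_lt_succ_iff.2 hij))
        intro k
        have he : (fun i : Fin (N+1) => I (i.castSucc.succ))
            = (fun i : Fin (N+1) => I (i.succ.castSucc)) := by
          funext i
          rw [Fin.succ_castSucc]
        have h2 := this k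
        rw [← he]
        exact h2
      -- goodness of both inner iterates
      have hgood1 := Diter_good N (fun i : Fin (N+1) => I (i.succ.castSucc))
        (fun i => c (i.succ.castSucc)) (fun i k => hpos _ k) (fun i => hc _)
        (fun i j hij => hmono (by
          rw [Fin.castSucc_lt_castSucc_iff, Fin.succ_lt_succ_iff]; exact hij))
      have hgood2 := Diter_good (N+1) (fun i : Fin (N+2) => I i.succ)
        (fun i => c i.succ) (fun i k => hpos _ k) (fun i => hc _)
        (fun i j hij => hmono (Fin.succ_lt_succ_iff.2 hij))
      have hlt1 : c 0 < c ((Fin.last N).succ.castSucc) := by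
        apply hmono
        simp [Fin.lt_def]
      have hlt2 : c 0 < c ((Fin.last (N+1)).succ) := by
        apply hmono
        simp [Fin.lt_def]
      exact Dmap_lt_Dmap (hpos 0) hgood1.1 hgood2.1 (hc 0) hgood1.2 hgood2.2
        hlt1 hlt2 hinner k
end AuxLemmas
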